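/- arXiv:1204.5117 — 5 statements merged into one kernel-verified Lean document; each statement's English description precedes it below -/
import Mathlib

section
/- Let λ = (λ₁ ≥ λ₂ ≥ … ≥ λ_N ≥ 0) be a partition with at most N parts, let λ⁻ = (λ_N, λ_{N−1}, …, λ₁) be its nondecreasing rearrangement, and for i ≥ 0 let m_λ(i) = #{j : 1 ≤ j ≤ N, λ_j = i}. Then the identity (t^N q; q, t)_λ · h_{q,t}(λ, t) · (t; t)_N = (t^N; q, t)_λ · h_{q,t}(λ⁻, qt) · Π_{i=0}^{λ₁} (t; t)_{m_λ(i)} holds in ℤ[q,t]. (This identity is equivalent, granted the hook formula for M_{λ⁻}(0), to the statement that M_{λ⁻}(0) = (−1)^{|λ|} · ((t^N;q,t)_λ / h_{q,t}(λ,t)) · φ(S_λ)/φ(S_N), where φ(S_λ) and φ(S_N) are the Poincaré polynomials of the stabilizer of λ and of the symmetric group S_N.) -/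
open Finset MvPolynomial

/-- `ℤ[q,t]`, with `q = X 0` and `t = X 1`. -/
abbrev Zqt : Type := MvPolynomial (Fin 2) ℤ

noncomputable def qz : Zqt := X 0
noncomputable def tz : Zqt := X 1

/-- The leg of the cell `(i,j)` (with `1 ≤ j ≤ v[i]`) in the diagram of `v`:
`l_v(i,j) = #{k < i : j ≤ v[k]+1 ≤ v[i]} + #{k > i : j ≤ v[k] ≤ v[i]}`. -/
def legf {N : ℕ} (v : Fin N → ℕ) (i : Fin N) (j : ℕ) : ℕ :=
  (univ.filter fun k : Fin N => k < i ∧ j ≤ v k + 1 ∧ v k + 1 ≤ v i).card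
    + (univ.filter fun k : Fin N => i < k ∧ j ≤ v k ∧ v k ≤ v i).card

/-- The `(q,t)`-hook product of `v` with argument `z`. -/
noncomputable def hookZ {N : ℕ} (v : Fin N → ℕ) (z : Zqt) : Zqt :=
  ∏ i : Fin N, ∏ j ∈ Icc 1 (v i), (1 - z * qz ^ (v i - j) * tz ^ legf v i j)

/-- `(t;t)_n = Π_{i=1}^{n} (1 − t^i)`. -/
noncomputable def ttPoch (n : ℕ) : Zqt := ∏ i ∈ Icc 1 n, (1 - tz ^ i)

/-- `(t^N q^ε; q, t)_λ = Π_{i=1}^{N} Π_{l=0}^{λ_i−1} (1 − q^{ε+l} t^{N+1−i})`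
(generalized Pochhammer symbol with `a = t^N q^ε`). -/
noncomputable def gpochTN {N : ℕ} (ε : ℕ) (lam : Fin N → ℕ) : Zqt :=
  ∏ i : Fin N, ∏ l ∈ range (lam i), (1 - qz ^ (ε + l) * tz ^ (N - (i : ℕ)))

/-!
Write every factor on either side as `1 - q^a t^e` and collect the factors row by row of `λ`
(rows indexed from `0`).
For the cell of arm `a` in row `r`, the leg in `λ` counts the parts in `[λ_r - a, λ_r)` plus the
parts equal to `λ_r` below row `r`; the leg of the matching cell of `λ⁻` (row `r.rev`, arm
`a - 1`, argument `qt`) counts the same parts plus the parts equal to `λ_r` above row `r`.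
Inside a block of `m` equal parts both counts run through `0, …, m - 1`, so the two products agree
after a permutation of each block, once each row carries a factor for every `a ≤ λ_r`. On the
right the missing `a = 0` factors are exactly the multiplicity Pochhammers `(t;t)_{m_λ(i)}`. On the
left the missing `a = λ_r` factor is `1 - q^{λ_r} t^{N-r}`, and
`(t^N q; q,t)_λ (t;t)_N = (t^N; q,t)_λ ∏_r (1 - q^{λ_r} t^{N-r})` row by row.
-/

namespace Finset

variable {α M : Type*} [LinearOrder α] [CommMonoid M]

theorem prod_card_filter_lt (s : Finset α) (g : ℕ → M) :
    ∏ x ∈ s, g #{y ∈ s | y < x} = ∏ k ∈ range #s, g k := by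
  induction s using Finset.induction_on_max with
  | empty => simp
  | insert a s ha ih =>
    have has : a ∉ s := fun h => lt_irrefl a (ha a h)
    rw [prod_insert has, card_insert_of_notMem has, prod_range_succ, mul_comm, ← ih]
    congr 1
    · refine prod_congr rfl fun x hx => ?_
      rw [filter_insert, if_neg (ha x hx).not_gt]
    · rw [filter_insert, if_neg (lt_irrefl a), filter_true_of_mem ha]

theorem prod_card_filter_gt (s : Finset α) (g : ℕ → M) :
    ∏ x ∈ s, g #{y ∈ s | x < y} = ∏ k ∈ range #s, g k := by
  simpa [filter_map, Function.comp_def] using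
    prod_card_filter_lt (s.map OrderDual.toDual.toEmbedding) g

theorem prod_Icc_one_eq_prod_range_succ (f : ℕ → M) (n : ℕ) :
    ∏ j ∈ Icc 1 n, f j = ∏ k ∈ range n, f (k + 1) := by
  simp [← Ico_add_one_right_eq_Icc, prod_Ico_eq_prod_range, add_comm]

theorem prod_Icc_one_eq_prod_range_sub (f : ℕ → M) (n : ℕ) :
    ∏ j ∈ Icc 1 n, f j = ∏ a ∈ range n, f (n - a) := by
  simpa [← Ico_add_one_right_eq_Icc] using (prod_Ico_reflect f 0 (Nat.le_succ n)).symm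

end Finset

section EqualParts

variable {ι β M : Type*} [Fintype ι] [LinearOrder ι] [DecidableEq β] [CommMonoid M]

def numEqBefore (f : ι → β) (i : ι) : ℕ := #{k | k < i ∧ f k = f i}

def numEqAfter (f : ι → β) (i : ι) : ℕ := #{k | i < k ∧ f k = f i}

theorem prod_numEqBefore (f : ι → β) {T : Finset β} (hT : ∀ i, f i ∈ T) (g : β → ℕ → M) :
    ∏ i, g (f i) (numEqBefore f i) = ∏ v ∈ T, ∏ k ∈ range #{i | f i = v}, g v k := by
  rw [← prod_fiberwise_of_maps_to fun i _ => hT i]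
  refine prod_congr rfl fun v _ => ?_
  rw [← prod_card_filter_lt]
  refine prod_congr rfl fun i hi => ?_
  obtain rfl : f i = v := (mem_filter.1 hi).2
  simp only [numEqBefore, filter_filter, and_comm]

theorem prod_numEqAfter (f : ι → β) {T : Finset β} (hT : ∀ i, f i ∈ T) (g : β → ℕ → M) :
    ∏ i, g (f i) (numEqAfter f i) = ∏ v ∈ T, ∏ k ∈ range #{i | f i = v}, g v k := by
  rw [← prod_fiberwise_of_maps_to fun i _ => hT i]
  refine prod_congr rfl fun v _ => ?_
  rw [← prod_card_filter_gt]
  refine prod_congr rfl fun i hi => ?_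
  obtain rfl : f i = v := (mem_filter.1 hi).2
  simp only [numEqAfter, filter_filter, and_comm]

theorem prod_numEqBefore_eq_prod_numEqAfter (f : ι → β) (g : β → ℕ → M) :
    ∏ i, g (f i) (numEqBefore f i) = ∏ i, g (f i) (numEqAfter f i) := by
  have hf (i : ι) : f i ∈ univ.image f := mem_image_of_mem f (mem_univ i)
  rw [prod_numEqBefore f hf, prod_numEqAfter f hf]

end EqualParts

section Legs

variable {N : ℕ} {lam : Fin N → ℕ}

variable (lam) in
def numPartsIco (j v : ℕ) : ℕ := #{k | j ≤ lam k ∧ lam k < v}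

@[simp]
theorem numPartsIco_self (v : ℕ) : numPartsIco lam v v = 0 :=
  card_eq_zero.2 (filter_eq_empty_iff.2 fun _ _ h => h.1.not_gt h.2)

theorem numPartsIco_add_numEqAfter (hlam : Antitone lam) {i : Fin N} {j : ℕ} (hj : j ≤ lam i) :
    numPartsIco lam j (lam i) + numEqAfter lam i = #{k | i < k ∧ j ≤ lam k} := by
  rw [numPartsIco, numEqAfter,
    ← card_union_of_disjoint (disjoint_filter.2 fun k _ h h' => by omega), ← filter_or]
  congr 1
  ext k
  simp only [mem_filter, mem_univ, true_and]
  constructor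
  · rintro (⟨hjk, hlt⟩ | ⟨hik, heq⟩)
    · exact ⟨lt_of_not_ge fun h => (hlam h).not_gt hlt, hjk⟩
    · exact ⟨hik, heq ▸ hj⟩
  · rintro ⟨hik, hjk⟩
    have := hlam hik.le
    omega

theorem numPartsIco_zero_add_numEqAfter (hlam : Antitone lam) (i : Fin N) :
    numPartsIco lam 0 (lam i) + numEqAfter lam i = N - 1 - i := by
  simp [numPartsIco_add_numEqAfter hlam (Nat.zero_le _), ← Fin.card_Ioi, Ioi, filter_lt_eq_Ioi]

theorem legf_eq_of_antitone (hlam : Antitone lam) {i : Fin N} {j : ℕ} (hj : j ≤ lam i) :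
    legf lam i j = numPartsIco lam j (lam i) + numEqAfter lam i := by
  rw [numPartsIco_add_numEqAfter hlam hj, legf, card_eq_zero.2, zero_add]
  · congr 1
    ext k
    simp only [mem_filter, mem_univ, true_and]
    exact ⟨fun h => ⟨h.1, h.2.1⟩, fun h => ⟨h.1, h.2, hlam h.1.le⟩⟩
  · ext k
    simp only [mem_filter, mem_univ, true_and, notMem_empty, iff_false]
    rintro ⟨hki, -, h⟩
    have := hlam hki.le
    omega

theorem legf_rev_eq_of_antitone (hlam : Antitone lam) {r : Fin N} {j : ℕ} (hj : 1 ≤ j)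
    (hjr : j ≤ lam r) :
    legf (fun k => lam k.rev) r.rev j = numPartsIco lam (j - 1) (lam r) + numEqBefore lam r := by
  rw [legf, numPartsIco, numEqBefore]
  congr 1 <;> refine card_equiv Fin.revPerm fun k => ?_ <;>
    simp only [mem_filter, mem_univ, true_and, Fin.revPerm_apply, Fin.rev_rev, Fin.lt_rev_iff,
      Fin.rev_lt_iff]
  · constructor
    · rintro ⟨-, h1, h2⟩
      omega
    · rintro ⟨h1, h2⟩
      exact ⟨lt_of_not_ge fun h => by have := hlam h; omega, by omega, by omega⟩
  · constructor
    · rintro ⟨h, -, h2⟩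
      exact ⟨h, le_antisymm h2 (hlam (Fin.rev_lt_iff.1 h).le)⟩
    · rintro ⟨h, h2⟩
      exact ⟨h, by omega, h2.le⟩

end Legs

theorem ttPoch_eq_prod_range (n : ℕ) : ttPoch n = ∏ k ∈ range n, (1 - tz ^ (k + 1)) :=
  prod_Icc_one_eq_prod_range_succ _ n

theorem ttPoch_eq_prod_fin (N : ℕ) : ttPoch N = ∏ r : Fin N, (1 - tz ^ (N - r)) := by
  rw [ttPoch, prod_Icc_one_eq_prod_range_sub,
    Fin.prod_univ_eq_prod_range (fun r => 1 - tz ^ (N - r))]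

theorem prod_ttPoch_card_eq {N : ℕ} {lam : Fin N → ℕ} {b : ℕ} (hb : ∀ r, lam r ≤ b) :
    ∏ v ∈ range (b + 1), ttPoch #{j | lam j = v} = ∏ r, (1 - tz ^ (numEqBefore lam r + 1)) := by
  simp only [ttPoch_eq_prod_range]
  exact (prod_numEqBefore lam (fun r => mem_range.2 (Nat.lt_succ_of_le (hb r)))
    fun _ k => 1 - tz ^ (k + 1)).symm

theorem gpochTN_one_mul_ttPoch {N : ℕ} (lam : Fin N → ℕ) :
    gpochTN 1 lam * ttPoch N = gpochTN 0 lam * ∏ r, (1 - qz ^ lam r * tz ^ (N - r)) := by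
  rw [ttPoch_eq_prod_fin, gpochTN, gpochTN, ← prod_mul_distrib, ← prod_mul_distrib]
  refine prod_congr rfl fun r _ => ?_
  calc _ = ∏ l ∈ range (lam r + 1), (1 - qz ^ l * tz ^ (N - r)) := by
        rw [prod_range_succ']; simp [add_comm]
    _ = _ := by rw [prod_range_succ]; simp

section Hooks

variable {N : ℕ} {lam : Fin N → ℕ}

theorem hookZ_eq_of_antitone (hlam : Antitone lam) :
    hookZ lam tz = ∏ r, ∏ a ∈ range (lam r),
      (1 - qz ^ a * tz ^ (numPartsIco lam (lam r - a) (lam r) + numEqAfter lam r + 1)) := by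
  refine prod_congr rfl fun r _ => ?_
  rw [prod_Icc_one_eq_prod_range_sub]
  refine prod_congr rfl fun a ha => ?_
  have ha : a < lam r := mem_range.1 ha
  rw [legf_eq_of_antitone hlam (Nat.sub_le _ _), Nat.sub_sub_self ha.le]
  ring

theorem hookZ_rev_eq_of_antitone (hlam : Antitone lam) :
    hookZ (fun i => lam i.rev) (qz * tz) = ∏ r, ∏ a ∈ range (lam r),
      (1 - qz ^ (a + 1) *
        tz ^ (numPartsIco lam (lam r - (a + 1)) (lam r) + numEqBefore lam r + 1)) := by
  rw [hookZ, ← Equiv.prod_comp Fin.revPerm]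
  refine prod_congr rfl fun r _ => ?_
  simp only [Fin.revPerm_apply, Fin.rev_rev]
  rw [prod_Icc_one_eq_prod_range_sub]
  refine prod_congr rfl fun a ha => ?_
  have ha : a < lam r := mem_range.1 ha
  rw [legf_rev_eq_of_antitone hlam (by omega) (Nat.sub_le _ _), Nat.sub_sub_self ha.le,
    Nat.sub_sub]
  ring

variable (lam) in
noncomputable def hookRow (v e : ℕ) : Zqt :=
  ∏ a ∈ range (v + 1), (1 - qz ^ a * tz ^ (numPartsIco lam (v - a) v + e + 1))

theorem hookZ_mul_prod_eq (hlam : Antitone lam) :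
    hookZ lam tz * ∏ r, (1 - qz ^ lam r * tz ^ (N - r)) =
      ∏ r, hookRow lam (lam r) (numEqAfter lam r) := by
  rw [hookZ_eq_of_antitone hlam, ← prod_mul_distrib]
  refine prod_congr rfl fun r _ => ?_
  rw [hookRow, prod_range_succ, Nat.sub_self, numPartsIco_zero_add_numEqAfter hlam]
  congr 4
  omega

theorem hookZ_rev_mul_prod_eq (hlam : Antitone lam) :
    hookZ (fun i => lam i.rev) (qz * tz) * ∏ r, (1 - tz ^ (numEqBefore lam r + 1)) =
      ∏ r, hookRow lam (lam r) (numEqBefore lam r) := by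
  rw [hookZ_rev_eq_of_antitone hlam, ← prod_mul_distrib]
  refine prod_congr rfl fun r _ => ?_
  simp [hookRow, prod_range_succ']

end Hooks

/-- For a partition `λ` with at most `N` parts, nondecreasing rearrangement
`λ⁻` and multiplicities `m_λ(i)`, the identity
`(t^N q; q,t)_λ · h_{q,t}(λ,t) · (t;t)_N
   = (t^N; q,t)_λ · h_{q,t}(λ⁻,qt) · Π_{i=0}^{λ₁} (t;t)_{m_λ(i)}`
holds in `ℤ[q,t]`. -/
theorem hook_pochhammer_reversal_identity
    (N : ℕ) (hN : 1 ≤ N) (lam : Fin N → ℕ) (hanti : Antitone lam) :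
    gpochTN 1 lam * hookZ lam tz * ttPoch N =
      gpochTN 0 lam * hookZ (fun i : Fin N => lam i.rev) (qz * tz) *
        ∏ i ∈ range (lam ⟨0, by omega⟩ + 1),
          ttPoch ((univ.filter fun j : Fin N => lam j = i).card) := by
  rw [prod_ttPoch_card_eq fun r => hanti (show (⟨0, by omega⟩ : Fin N) ≤ r from Nat.zero_le _)]
  calc gpochTN 1 lam * hookZ lam tz * ttPoch N
      = gpochTN 0 lam * (hookZ lam tz * ∏ r, (1 - qz ^ lam r * tz ^ (N - r))) := by
        linear_combination hookZ lam tz * gpochTN_one_mul_ttPoch lam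
    _ = gpochTN 0 lam * ∏ r, hookRow lam (lam r) (numEqAfter lam r) := by
        rw [hookZ_mul_prod_eq hanti]
    _ = gpochTN 0 lam * ∏ r, hookRow lam (lam r) (numEqBefore lam r) := by
        rw [prod_numEqBefore_eq_prod_numEqAfter]
    _ = _ := by
        rw [← hookZ_rev_mul_prod_eq hanti, mul_assoc]
end

section
/- Let N, k, m be integers with k ≥ 1, m ≥ 2 and 2k ≤ N, and let λ be a partition with λ₁ ≤ m and at most k nonzero parts (i.e. λ ⊆ (m^k)). Let q₀, t₀ be nonzero complex numbers, neither of which is a root of unity, satisfying q₀^{m−1} t₀^{N−k+1} = 1 and, for every common divisor e > 1 of m−1 and N−k+1, q₀^{(m−1)/e} t₀^{(N−k+1)/e} ≠ 1. Then Π_{i=1}^{k} Π_{j=1}^{λ_i} (1 − t₀^{N+1−i} q₀^{j−1}) = 0 if and only if λ = (m^k). (This product is the specialization at (q₀,t₀) of (t^N; q, t)_λ, which governs the vanishing of the principal specialization P_λ(⟨0⟩); consequently P_{(m^k)}(⟨0⟩)/P_λ(⟨0⟩) = 0 for all partitions λ strictly contained in (m^k).) -/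
/-!
A factor `1 - t₀^(N-i) q₀^j` vanishes iff `t₀^a q₀^j = 1` with `a = N - i ≥ N - k + 1 =: B` and
`j ≤ m - 1 =: A`. Raising this relation to the power `A` and `q₀^A t₀^B = 1` to the power `j`
eliminates `q₀` and gives `t₀^(aA) = t₀^(Bj)`, so `aA = Bj` since `t₀` is not a root of unity.
The bounds `Bj ≤ BA ≤ aA` then force `j = A` and `a = B`: the only vanishing factor is the one
in the last row `i = k` and last column `j = m`, which lies in `λ` only when `λ = (m^k)`.
-/

open Finset Function

theorem pow_injective_of_ne_zero {G₀ : Type*} [GroupWithZero G₀] {t : G₀} (ht : t ≠ 0)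
    (hru : ∀ r : ℕ, 0 < r → t ^ r ≠ 1) : Injective (t ^ · : ℕ → G₀) := by
  have hu : ¬IsOfFinOrder (Units.mk0 t ht) := by
    rw [isOfFinOrder_iff_pow_eq_one]
    rintro ⟨n, hn, h⟩
    exact hru n hn (by simpa [Units.ext_iff] using h)
  intro x y h
  exact injective_pow_iff_not_isOfFinOrder.mpr hu (Units.ext (by simpa using h))

theorem pow_mul_eq_pow_mul_of_mul_pow_eq_one {M : Type*} [CommMonoid M] {q t : M}
    {A B a j : ℕ} (hrel : q ^ A * t ^ B = 1) (h : t ^ a * q ^ j = 1) :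
    t ^ (B * j) = t ^ (a * A) :=
  calc t ^ (B * j) = (t ^ a * q ^ j) ^ A * t ^ (B * j) := by rw [h, one_pow, one_mul]
    _ = t ^ (a * A) * (q ^ A * t ^ B) ^ j := by
      simp only [mul_pow, ← pow_mul, mul_comm j A]
      ac_rfl
    _ = t ^ (a * A) := by rw [hrel, one_pow, mul_one]

theorem eq_and_eq_of_pow_mul_pow_eq_one {M : Type*} [CommMonoid M] {q t : M}
    (ht : Injective (t ^ · : ℕ → M)) {A B a j : ℕ} (hA : 0 < A) (hB : 0 < B)
    (hrel : q ^ A * t ^ B = 1) (hj : j ≤ A) (ha : B ≤ a) (h : t ^ a * q ^ j = 1) :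
    j = A ∧ a = B := by
  have hexp : B * j = a * A := ht (pow_mul_eq_pow_mul_of_mul_pow_eq_one hrel h)
  have hBj : B * j ≤ B * A := Nat.mul_le_mul_left B hj
  have haA : B * A ≤ a * A := Nat.mul_le_mul_right A ha
  exact ⟨le_antisymm hj (Nat.le_of_mul_le_mul_left (by omega) hB),
    le_antisymm (Nat.le_of_mul_le_mul_right (by omega) hA) ha⟩

theorem Antitone.eq_const_of_isTop {α β : Type*} [Preorder α] [PartialOrder β] {f : α → β}
    (hf : Antitone f) {c : β} (hc : ∀ x, f x ≤ c) {i : α} (hi : IsTop i) (hfi : f i = c) :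
    f = fun _ => c :=
  funext fun x => le_antisymm (hc x) (hfi ▸ hf (hi x))

theorem pochhammer_specialization_vanishing_iff_general
    (N k m : ℕ) (hk : 1 ≤ k) (hm : 2 ≤ m) (hkN : 2 * k ≤ N)
    (lam : Fin k → ℕ) (hanti : Antitone lam) (hsub : ∀ i, lam i ≤ m)
    (q₀ t₀ : ℂ) (ht₀ : t₀ ≠ 0)
    (htru : ∀ r : ℕ, 0 < r → t₀ ^ r ≠ 1)
    (hrel : q₀ ^ (m - 1) * t₀ ^ (N - k + 1) = 1) :
    (∏ i : Fin k, ∏ j ∈ range (lam i), (1 - t₀ ^ (N - (i : ℕ)) * q₀ ^ j)) = 0 ↔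
      lam = fun _ => m := by
  constructor
  · intro h
    obtain ⟨i, -, hi⟩ := prod_eq_zero_iff.mp h
    obtain ⟨j, hj, hfactor⟩ := prod_eq_zero_iff.mp hi
    have hji := mem_range.mp hj
    have hlam := hsub i
    obtain ⟨hjA, haB⟩ := eq_and_eq_of_pow_mul_pow_eq_one (pow_injective_of_ne_zero ht₀ htru)
      (by omega) (by omega) hrel (by omega) (by omega) (sub_eq_zero.mp hfactor).symm
    exact hanti.eq_const_of_isTop hsub (i := i) (fun i' => Fin.le_def.mpr (by omega)) (by omega)
  · rintro rfl
    refine prod_eq_zero (mem_univ ⟨k - 1, by omega⟩)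
      (prod_eq_zero (mem_range.mpr (by omega : m - 1 < m)) ?_)
    rw [show N - (k - 1) = N - k + 1 by omega, mul_comm, hrel, sub_self]

/-- Let `k ≥ 1`, `m ≥ 2`, `2k ≤ N`, and let `λ ⊆ (m^k)` be a partition.
If `q₀, t₀` are nonzero complex numbers, neither a root of unity, with
`q₀^{m−1} t₀^{N−k+1} = 1` and no lower-order such relation, then
`Π_{i=1}^{k} Π_{j=1}^{λ_i} (1 − t₀^{N+1−i} q₀^{j−1}) = 0` if and only if `λ = (m^k)`. -/
theorem pochhammer_specialization_vanishing_iff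
    (N k m : ℕ) (hk : 1 ≤ k) (hm : 2 ≤ m) (hkN : 2 * k ≤ N)
    (lam : Fin k → ℕ) (hanti : Antitone lam) (hsub : ∀ i, lam i ≤ m)
    (q₀ t₀ : ℂ) (hq₀ : q₀ ≠ 0) (ht₀ : t₀ ≠ 0)
    (hqru : ∀ r : ℕ, 0 < r → q₀ ^ r ≠ 1) (htru : ∀ r : ℕ, 0 < r → t₀ ^ r ≠ 1)
    (hrel : q₀ ^ (m - 1) * t₀ ^ (N - k + 1) = 1)
    (hmin : ∀ e : ℕ, 1 < e → e ∣ (m - 1) → e ∣ (N - k + 1) →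
      q₀ ^ ((m - 1) / e) * t₀ ^ ((N - k + 1) / e) ≠ 1) :
    (∏ i : Fin k, ∏ j ∈ range (lam i), (1 - t₀ ^ (N - (i : ℕ)) * q₀ ^ j)) = 0 ↔
      lam = fun _ => m :=
  pochhammer_specialization_vanishing_iff_general N k m hk hm hkN lam hanti hsub q₀ t₀ ht₀ htru hrel
end

section
/- Let a and b be positive integers and d = gcd(a,b). Let Z = {(q,t) ∈ ℂ × ℂ : q^a t^b = 1 and, for every integer e > 1 dividing both a and b, q^{a/e} t^{b/e} ≠ 1}. Then Z, with the subspace topology from ℂ², has exactly φ(d) connected components, where φ is Euler's totient function. (In particular, if gcd(a,b) = 1 then the complex surface {(q,t) : q^a t^b = 1} is connected.) -/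
/-!
Put `d = gcd a b`, `A = a / d`, `B = b / d`. For `e ∣ d` one has
`q^(a/e) t^(b/e) = (q^A t^B)^(d/e)`, so the locus is exactly the set where the monomial
`q^A t^B` is a primitive `d`-th root of unity. As `A` and `B` are coprime, Bézout shows that every
fibre of the monomial over a nonzero value is a single orbit of `ℂ` acting by
`s • (q, t) = (q e^(B s), t e^(-A s))`, hence connected. So the monomial identifies the connected
components of the locus with the `φ d` primitive roots.
-/

open Complex Function

theorem exists_eq_pow_and_eq_inv_pow_of_coprime {G : Type*} [CommGroup G] {A B : ℕ}
    (hAB : A.Coprime B) {x y : G} (hxy : x ^ A * y ^ B = 1) :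
    ∃ w : G, x = w ^ B ∧ y = w⁻¹ ^ A := by
  obtain ⟨u, v, huv⟩ := hAB.isCoprime
  have hxy' : x ^ (A : ℤ) * y ^ (B : ℤ) = 1 := mod_cast hxy
  have hy : y ^ (B : ℤ) = (x ^ (A : ℤ))⁻¹ := eq_inv_of_mul_eq_one_right hxy'
  have hx : x ^ (A : ℤ) = (y ^ (B : ℤ))⁻¹ := eq_inv_of_mul_eq_one_left hxy'
  -- `w` is `x^v y^(-u)` for a Bézout relation `u A + v B = 1`
  refine ⟨x ^ v * y ^ (-u), ?_, ?_⟩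
  · rw [← zpow_natCast]
    calc x = x ^ (u * A + v * B) := by rw [huv, zpow_one]
      _ = x ^ (v * B) * ((x ^ (A : ℤ))⁻¹) ^ (-u) := by group
      _ = (x ^ v * y ^ (-u)) ^ (B : ℤ) := by rw [← hy, mul_zpow]; group
  · rw [← zpow_natCast]
    calc y = y ^ (u * A + v * B) := by rw [huv, zpow_one]
      _ = ((y ^ (B : ℤ))⁻¹) ^ (-v) * y ^ (u * A) := by group
      _ = (x ^ v * y ^ (-u))⁻¹ ^ (A : ℤ) := by rw [← hx, mul_inv, mul_zpow]; group

theorem Continuous.connectedComponentsLift_bijective {X Y : Type*} [TopologicalSpace X]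
    [TopologicalSpace Y] [TotallyDisconnectedSpace Y] {f : X → Y} (hf : Continuous f)
    (hsurj : Surjective f) (hfib : ∀ x x', f x = f x' → x' ∈ connectedComponent x) :
    Bijective hf.connectedComponentsLift := by
  refine ⟨fun c c' hcc' ↦ ?_, fun y ↦ ?_⟩
  · obtain ⟨x, rfl⟩ := ConnectedComponents.surjective_coe c
    obtain ⟨x', rfl⟩ := ConnectedComponents.surjective_coe c'
    simp only [hf.connectedComponentsLift_apply_coe] at hcc'
    exact (ConnectedComponents.coe_eq_coe'.mpr (hfib x x' hcc')).symm
  · obtain ⟨x, rfl⟩ := hsurj y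
    exact ⟨x, hf.connectedComponentsLift_apply_coe x⟩

theorem IsPrimitiveRoot.iff_forall_pow_div_ne_one {M : Type*} [CommMonoid M] {z : M} {d : ℕ}
    (hd : 0 < d) :
    IsPrimitiveRoot z d ↔ z ^ d = 1 ∧ ∀ e, 1 < e → e ∣ d → z ^ (d / e) ≠ 1 := by
  refine ⟨fun h ↦ ⟨h.pow_eq_one, fun e he hed ↦ ?_⟩, fun ⟨hz, h⟩ ↦ ?_⟩
  · exact h.pow_ne_one_of_pos_of_lt (Nat.div_pos (Nat.le_of_dvd hd hed) (by omega)).ne'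
      (Nat.div_lt_self hd he)
  · exact IsPrimitiveRoot.iff_orderOf.mpr <|
      orderOf_eq_of_pow_and_pow_div_prime hd hz fun p hp hpd ↦ h p hp.one_lt hpd

theorem pow_div_mul_pow_div_eq_pow {M : Type*} [CommMonoid M] (q t : M) {a b d e : ℕ}
    (ha : d ∣ a) (hb : d ∣ b) (he : e ∣ d) :
    q ^ (a / e) * t ^ (b / e) = (q ^ (a / d) * t ^ (b / d)) ^ (d / e) := by
  rw [mul_pow, ← pow_mul, ← pow_mul, Nat.div_mul_div ha he, Nat.div_mul_div hb he]

theorem pow_mul_pow_eq_one_and_forall_ne_one_iff {M : Type*} [CommMonoid M] (q t : M) {a b : ℕ}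
    (hab : 0 < a.gcd b) :
    (q ^ a * t ^ b = 1 ∧ ∀ e, 1 < e → e ∣ a → e ∣ b → q ^ (a / e) * t ^ (b / e) ≠ 1) ↔
      IsPrimitiveRoot (q ^ (a / a.gcd b) * t ^ (b / a.gcd b)) (a.gcd b) := by
  have key (e : ℕ) (he : e ∣ a.gcd b) :=
    pow_div_mul_pow_div_eq_pow q t (Nat.gcd_dvd_left a b) (Nat.gcd_dvd_right a b) he
  have key_one : q ^ a * t ^ b = (q ^ (a / a.gcd b) * t ^ (b / a.gcd b)) ^ a.gcd b := by
    simpa only [Nat.div_one] using key 1 (one_dvd _)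
  rw [IsPrimitiveRoot.iff_forall_pow_div_ne_one hab, ← key_one]
  refine and_congr_right fun _ ↦ forall_congr' fun e ↦ imp_congr_right fun _ ↦ ?_
  rw [← and_imp, ← Nat.dvd_gcd_iff]
  exact imp_congr_right fun he ↦ by rw [key e he]

section Monomial

variable {A B : ℕ}

theorem pow_mul_pow_mul_exp_eq (q t s : ℂ) :
    (q * exp (B * s)) ^ A * (t * exp (-(A * s))) ^ B = q ^ A * t ^ B := by
  rw [mul_pow, mul_pow, ← exp_nat_mul, ← exp_nat_mul, mul_mul_mul_comm, ← exp_add]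
  ring_nf
  rw [exp_zero, mul_one]

theorem exists_eq_mul_exp_of_pow_mul_pow_eq (hAB : A.Coprime B) {q t q' t' : ℂ}
    (hq : q ≠ 0) (ht : t ≠ 0) (hq' : q' ≠ 0) (ht' : t' ≠ 0)
    (h : q' ^ A * t' ^ B = q ^ A * t ^ B) :
    ∃ s : ℂ, q' = q * exp (B * s) ∧ t' = t * exp (-(A * s)) := by
  have hunit : (Units.mk0 q' hq' / Units.mk0 q hq) ^ A * (Units.mk0 t' ht' / Units.mk0 t ht) ^ B
      = 1 := by
    ext
    simp only [Units.val_mul, Units.val_pow_eq_pow_val, Units.val_div_eq_div_val, Units.val_mk0,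
      Units.val_one, div_pow]
    rw [div_mul_div_comm, h, div_self (mul_ne_zero (pow_ne_zero _ hq) (pow_ne_zero _ ht))]
  obtain ⟨w, hwq, hwt⟩ := exists_eq_pow_and_eq_inv_pow_of_coprime hAB hunit
  refine ⟨log w, ?_, ?_⟩
  · rw [exp_nat_mul, exp_log w.ne_zero, ← Units.val_pow_eq_pow_val, ← hwq]
    simp [mul_div_cancel₀ _ hq]
  · rw [exp_neg, exp_nat_mul, exp_log w.ne_zero, ← inv_pow, ← Units.val_inv_eq_inv_val,
      ← Units.val_pow_eq_pow_val, ← hwt]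
    simp [mul_div_cancel₀ _ ht]

theorem mem_connectedComponent_of_pow_mul_pow_eq (hAB : A.Coprime B) (hA : 0 < A)
    (hB : 0 < B) {S : Set ℂ} (hS : 0 ∉ S) {x x' : {p : ℂ × ℂ // p.1 ^ A * p.2 ^ B ∈ S}}
    (h : x.1.1 ^ A * x.1.2 ^ B = x'.1.1 ^ A * x'.1.2 ^ B) : x' ∈ connectedComponent x := by
  have hne (y : {p : ℂ × ℂ // p.1 ^ A * p.2 ^ B ∈ S}) : y.1.1 ≠ 0 ∧ y.1.2 ≠ 0 := by
    constructor <;> rintro h0 <;> apply hS <;> simpa [h0, hA.ne', hB.ne'] using y.2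
  obtain ⟨s, hs⟩ :=
    exists_eq_mul_exp_of_pow_mul_pow_eq hAB (hne x).1 (hne x).2 (hne x').1 (hne x').2 h.symm
  let orbit (σ : ℂ) : {p : ℂ × ℂ // p.1 ^ A * p.2 ^ B ∈ S} :=
    ⟨(x.1.1 * exp (B * σ), x.1.2 * exp (-(A * σ))), by
      rw [pow_mul_pow_mul_exp_eq]; exact x.2⟩
  have horbit : Continuous orbit := by fun_prop
  have h0 : orbit 0 = x := by ext <;> simp [orbit]
  have hs' : orbit s = x' := by ext <;> simp [orbit, ← hs.1, ← hs.2]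
  exact (isConnected_range horbit).subset_connectedComponent ⟨0, h0⟩ ⟨s, hs'⟩

theorem card_connectedComponents_pow_mul_pow_mem (hAB : A.Coprime B)
    (hA : 0 < A) (hB : 0 < B) {S : Set ℂ} [TotallyDisconnectedSpace S] (hS : 0 ∉ S) :
    Nat.card (ConnectedComponents {p : ℂ × ℂ // p.1 ^ A * p.2 ^ B ∈ S}) = Nat.card S := by
  let F (p : {p : ℂ × ℂ // p.1 ^ A * p.2 ^ B ∈ S}) : S := ⟨p.1.1 ^ A * p.1.2 ^ B, p.2⟩
  have hF : Continuous F := by fun_prop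
  refine Nat.card_eq_of_bijective _ (hF.connectedComponentsLift_bijective (fun y ↦ ?_)
    fun x x' h ↦ mem_connectedComponent_of_pow_mul_pow_eq hAB hA hB hS (congrArg Subtype.val h))
  obtain ⟨q, hq⟩ := IsAlgClosed.exists_pow_nat_eq (y : ℂ) hA
  exact ⟨⟨(q, 1), by simp [hq]⟩, Subtype.ext (by simp [F, hq])⟩

end Monomial

/-- Let `a, b` be positive integers and `d = gcd(a,b)`.  The locus
`Z = {(q,t) ∈ ℂ² : q^a t^b = 1` and `q^{a/e} t^{b/e} ≠ 1` for every common divisor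
`e > 1` of `a` and `b}` has exactly `φ(d)` connected components. -/
theorem singular_parameter_locus_connected_components
    (a b : ℕ) (ha : 0 < a) (hb : 0 < b) :
    Nat.card (ConnectedComponents
      {p : ℂ × ℂ // p.1 ^ a * p.2 ^ b = 1 ∧
        ∀ e : ℕ, 1 < e → e ∣ a → e ∣ b → p.1 ^ (a / e) * p.2 ^ (b / e) ≠ 1}) =
      Nat.totient (Nat.gcd a b) := by
  have hd : 0 < a.gcd b := Nat.gcd_pos_of_pos_left b ha
  have hA : 0 < a / a.gcd b := Nat.div_pos (Nat.gcd_le_left b ha) hd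
  have hB : 0 < b / a.gcd b := Nat.div_pos (Nat.gcd_le_right _ hb) hd
  have hlocus : (fun p : ℂ × ℂ ↦ p.1 ^ a * p.2 ^ b = 1 ∧
      ∀ e : ℕ, 1 < e → e ∣ a → e ∣ b → p.1 ^ (a / e) * p.2 ^ (b / e) ≠ 1) =
      fun p ↦ p.1 ^ (a / a.gcd b) * p.2 ^ (b / a.gcd b) ∈ (primitiveRoots (a.gcd b) ℂ : Set ℂ) := by
    ext p
    rw [Finset.mem_coe, mem_primitiveRoots hd, pow_mul_pow_eq_one_and_forall_ne_one_iff _ _ hd]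
  rw [hlocus, card_connectedComponents_pow_mul_pow_mem (Nat.coprime_div_gcd_div_gcd hd) hA hB
    fun h0 ↦ ((mem_primitiveRoots hd).mp h0).ne_zero hd.ne' rfl, Nat.card_coe_set_eq,
    Set.ncard_coe_finset, Complex.card_primitiveRoots]
end

section
/- Let q and t be nonzero complex numbers, neither of which is a root of unity. Let m, n be positive integers with d = gcd(m,n), and suppose q^m t^n = 1. Then for any integers a, b with q^a t^b = 1 there exists an integer j such that a = j·(m/d) and b = j·(n/d). -/
/-!
Dividing the `n`-th power of `q^a t^b = 1` by the `b`-th power of `q^m t^n = 1` eliminates `t`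
and leaves `q^(a n - m b) = 1`; since `q` is not a root of unity, `a n = m b`. Dividing this by
`d = gcd(m, n)` gives `a (n/d) = (m/d) b` with `m/d` and `n/d` coprime, so `m/d ∣ a`.
-/

theorem eq_zero_of_zpow_eq_one {α : Type*} [DivisionMonoid α] {x : α}
    (hx : ∀ r : ℕ, 0 < r → x ^ r ≠ 1) {k : ℤ} (h : x ^ k = 1) : k = 0 := by
  by_contra hk
  refine hx k.natAbs (Int.natAbs_pos.mpr hk) ?_
  rcases Int.natAbs_eq k with hk | hk <;> rw [hk] at h
  · rwa [zpow_natCast] at h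
  · rwa [zpow_neg, inv_eq_one, zpow_natCast] at h

theorem zpow_mul_sub_mul_eq_one {G₀ : Type*} [CommGroupWithZero G₀] {x y : G₀}
    (hx : x ≠ 0) (hy : y ≠ 0) {a b m n : ℤ} (hab : x ^ a * y ^ b = 1)
    (hmn : x ^ m * y ^ n = 1) : x ^ (a * n - m * b) = 1 :=
  calc x ^ (a * n - m * b) = (x ^ a * y ^ b) ^ n / (x ^ m * y ^ n) ^ b := by
        rw [mul_zpow, mul_zpow, ← zpow_mul, ← zpow_mul, ← zpow_mul, ← zpow_mul, mul_comm n b,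
          mul_div_mul_right _ _ (zpow_ne_zero _ hy), zpow_sub₀ hx]
    _ = 1 := by rw [hab, hmn, one_zpow, one_zpow, div_one]

theorem exists_eq_mul_div_gcd_of_mul_eq_mul {R : Type*} [EuclideanDomain R]
    [GCDMonoid R] {a b p q : R} (hp : p ≠ 0) (h : a * q = p * b) :
    ∃ j, a = j * (p / gcd p q) ∧ b = j * (q / gcd p q) := by
  set p' := p / gcd p q
  set q' := q / gcd p q
  have hg : gcd p q ≠ 0 := gcd_ne_zero_of_left hp
  have hp' : p' ≠ 0 := left_div_gcd_ne_zero hp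
  have h' : a * q' = p' * b := by
    apply mul_left_cancel₀ hg
    rw [mul_left_comm, EuclideanDomain.mul_div_cancel' hg (gcd_dvd_right p q), ← mul_assoc,
      EuclideanDomain.mul_div_cancel' hg (gcd_dvd_left p q), h]
  obtain ⟨j, rfl⟩ : p' ∣ a :=
    (isCoprime_div_gcd_div_gcd_of_gcd_ne_zero hg).dvd_of_dvd_mul_right ⟨b, h'⟩
  refine ⟨j, mul_comm _ _, ?_⟩
  apply mul_left_cancel₀ hp'
  rw [← h', mul_assoc]

theorem rectangular_macdonald_monomial_relations_general
    (q t : ℂ) (hq : q ≠ 0) (ht : t ≠ 0)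
    (hqru : ∀ r : ℕ, 0 < r → q ^ r ≠ 1)
    (m n : ℕ) (hm : 0 < m) (d : ℕ) (hd : d = Nat.gcd m n)
    (hrel : q ^ m * t ^ n = 1)
    (a b : ℤ) (hab : q ^ a * t ^ b = 1) :
    ∃ j : ℤ, a = j * ((m / d : ℕ) : ℤ) ∧ b = j * ((n / d : ℕ) : ℤ) := by
  have hrel' : q ^ (m : ℤ) * t ^ (n : ℤ) = 1 := by rwa [zpow_natCast, zpow_natCast]
  have hkey : a * n = m * b :=
    sub_eq_zero.mp (eq_zero_of_zpow_eq_one hqru (zpow_mul_sub_mul_eq_one hq ht hab hrel'))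
  have hgcd : gcd (m : ℤ) n = d := by rw [← Int.coe_gcd, Int.gcd_natCast_natCast, hd]
  obtain ⟨j, ha, hb⟩ :=
    exists_eq_mul_div_gcd_of_mul_eq_mul (by exact_mod_cast hm.ne') hkey
  rw [hgcd] at ha hb
  exact ⟨j, by rwa [Int.natCast_div], by rwa [Int.natCast_div]⟩

/-- Let `q` and `t` be nonzero complex numbers, neither a root of unity.
Let `m, n` be positive integers with `d = gcd(m,n)`, and suppose `q^m * t^n = 1`.
Then for any integers `a, b` with `q^a * t^b = 1` there exists an integer `j` such
that `a = j*(m/d)` and `b = j*(n/d)`. -/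
theorem rectangular_macdonald_monomial_relations
    (q t : ℂ) (hq : q ≠ 0) (ht : t ≠ 0)
    (hqru : ∀ r : ℕ, 0 < r → q ^ r ≠ 1) (htru : ∀ r : ℕ, 0 < r → t ^ r ≠ 1)
    (m n : ℕ) (hm : 0 < m) (hn : 0 < n) (d : ℕ) (hd : d = Nat.gcd m n)
    (hrel : q ^ m * t ^ n = 1)
    (a b : ℤ) (hab : q ^ a * t ^ b = 1) :
    ∃ j : ℤ, a = j * ((m / d : ℕ) : ℤ) ∧ b = j * ((n / d : ℕ) : ℤ) :=
  rectangular_macdonald_monomial_relations_general q t hq ht hqru m n hm d hd hrel a b hab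
end

section
/- Let N ≥ 1 and 0 ≤ k < N be integers, and let u, v ∈ ℕ^N with u[j] = 0 for all j > k. Suppose w is a permutation of {1,…,N} such that for every i ∈ {1,…,N}: if w(i) ≤ i then v[i] ≤ u[w(i)], and if w(i) > i then v[i] < u[w(i)]. Then w(j) = j and v[j] = 0 for every j > k. (Consequently, by Knop's extra-vanishing theorem, if the shifted nonsymmetric Macdonald polynomial M_v does not vanish at the spectral point ⟨u⟩ of a vector u supported in the first k coordinates, then v is also supported in the first k coordinates.) -/
/-!
Let `S` be the set of indices `j ≥ k`, on which `u` vanishes. If `w i = j ∈ S` with `i < j`,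
the hypothesis would give `v i < u j = 0`; hence `w⁻¹` does not move any `j ∈ S` downwards.
An injective self-map of a finite order that moves no point of an upper set downwards fixes
that set pointwise (descending induction), so `w` fixes `S`, and then `v j ≤ u j = 0` there.
-/

theorem IsUpperSet.apply_eq_self_of_le_apply {α : Type*} [PartialOrder α] [WellFoundedGT α]
    {f : α → α} (hf : Function.Injective f) {S : Set α} (hS : IsUpperSet S)
    (hle : ∀ j ∈ S, j ≤ f j) : ∀ j ∈ S, f j = j := by
  intro j
  induction j using WellFoundedGT.induction with
  | _ j ih =>
    intro hj
    refine (hle j hj).eq_or_lt.elim Eq.symm fun hlt => ?_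
    have hfix : f (f j) = f j := ih (f j) hlt (hS (hle j hj) hj)
    exact absurd (hf hfix) hlt.ne'

theorem knop_extra_vanishing_support_general
    (N k : ℕ)
    (u v : Fin N → ℕ) (hu : ∀ j : Fin N, k ≤ (j : ℕ) → u j = 0)
    (w : Equiv.Perm (Fin N))
    (hw : ∀ i : Fin N, (w i ≤ i → v i ≤ u (w i)) ∧ (i < w i → v i < u (w i))) :
    ∀ j : Fin N, k ≤ (j : ℕ) → w j = j ∧ v j = 0 := by
  have hS : IsUpperSet {j : Fin N | k ≤ (j : ℕ)} := fun _ _ hab ha => le_trans (α := ℕ) ha hab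
  have hle : ∀ j ∈ {j : Fin N | k ≤ (j : ℕ)}, j ≤ w.symm j := by
    intro j hj
    by_contra! hlt
    have hv := (hw (w.symm j)).2 (by simpa using hlt)
    simp [hu j hj] at hv
  have hfix := hS.apply_eq_self_of_le_apply w.symm.injective hle
  intro j hj
  have hwj : w j = j := (w.symm_apply_eq.mp (hfix j hj)).symm
  have hv := (hw j).1 hwj.le
  rw [hwj, hu j hj] at hv
  exact ⟨hwj, Nat.le_zero.mp hv⟩

/-- Let `N ≥ 1` and `0 ≤ k < N`, and let `u, v ∈ ℕ^N` with `u[j] = 0` for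
all `j > k`. Suppose `w` is a permutation of `{1,…,N}` such that for every `i`:
if `w(i) ≤ i` then `v[i] ≤ u[w(i)]`, and if `w(i) > i` then `v[i] < u[w(i)]`.
Then `w(j) = j` and `v[j] = 0` for every `j > k`. -/
theorem knop_extra_vanishing_support
    (N k : ℕ) (hN : 1 ≤ N) (hk : k < N)
    (u v : Fin N → ℕ) (hu : ∀ j : Fin N, k ≤ (j : ℕ) → u j = 0)
    (w : Equiv.Perm (Fin N))
    (hw : ∀ i : Fin N, (w i ≤ i → v i ≤ u (w i)) ∧ (i < w i → v i < u (w i))) :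
    ∀ j : Fin N, k ≤ (j : ℕ) → w j = j ∧ v j = 0 :=
  knop_extra_vanishing_support_general N k u v hu w hw
end
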